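/- Let E be a phase observable and suppose ‖E(X₀)‖ < 1 for some Borel set X₀ with E(X₀) ≠ O. Then for the complement X₀' one has E(X₀') ≥ (1 − ‖E(X₀)‖)·I > 0, so E(X₀') is invertible with range the whole Hilbert space; consequently, for every one-dimensional projection P, the infimum P ∧ E(X₀') (the largest effect below both) is nonzero. Hence N and E are not complementary. -/

import Mathlib

/-!
Since `E(X₀') = 1 - E(X₀)` and `‖E(X₀)‖ < 1`, the effect `E(X₀')` is coercive with constant
`κ = 1 - ‖E(X₀)‖`, hence invertible. For a unit vector `φ`, the effect `κ P` with `P = |φ⟩⟨φ|`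
is nonzero and lies below both `P` and `E(X₀')`, because `κ P ≤ κ 1 ≤ E(X₀')`.
-/

open MeasureTheory Complex

/-- `phaseInt X n m = (1/2π) ∫_X e^{i(n-m)x} dx`. -/
noncomputable def phaseInt (X : Set ℝ) (n m : ℕ) : ℂ :=
  ((1 / (2 * Real.pi) : ℝ) : ℂ) *
    ∫ x in X, Complex.exp (Complex.I * ((n : ℂ) - (m : ℂ)) * (x : ℂ))

open ContinuousLinearMap InnerProductSpace RCLike
open scoped ComplexOrder InnerProductSpace

namespace ContinuousLinearMap

variable {𝕜 E : Type*} [RCLike 𝕜] [NormedAddCommGroup E] [InnerProductSpace 𝕜 E]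

theorem re_inner_apply_self_le (A : E →L[𝕜] E) (x : E) : re ⟪x, A x⟫_𝕜 ≤ ‖A‖ * ‖x‖ ^ 2 :=
  calc re ⟪x, A x⟫_𝕜 ≤ ‖x‖ * ‖A x‖ := re_inner_le_norm _ _
    _ ≤ ‖x‖ * (‖A‖ * ‖x‖) := by gcongr; exact A.le_opNorm x
    _ = ‖A‖ * ‖x‖ ^ 2 := by ring

theorem one_sub_norm_mul_sq_le_re_inner_one_sub (A : E →L[𝕜] E) (x : E) :
    (1 - ‖A‖) * ‖x‖ ^ 2 ≤ re ⟪x, (1 - A) x⟫_𝕜 := by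
  rw [sub_apply, one_apply_eq_self, inner_sub_right, map_sub, inner_self_eq_norm_sq]
  linarith [A.re_inner_apply_self_le x]

variable [CompleteSpace E]

theorem surjective_of_forall_mul_sq_le_re_inner {T : E →L[𝕜] E} {κ : ℝ} (hκ : 0 < κ)
    (hT : ∀ x, κ * ‖x‖ ^ 2 ≤ re ⟪x, T x⟫_𝕜) : Function.Surjective T := by
  refine (isUnit_iff_bijective.mp (T.isUnit_of_forall_le_norm_inner_map (c := ⟨κ, hκ.le⟩) hκ
    fun x => ?_)).surjective
  calc ‖x‖ ^ 2 * κ ≤ re ⟪x, T x⟫_𝕜 := by linarith [hT x]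
    _ ≤ ‖⟪x, T x⟫_𝕜‖ := re_le_norm _
    _ = ‖⟪T x, x⟫_𝕜‖ := by rw [← inner_conj_symm, RCLike.norm_conj]

theorem smul_one_le_of_forall_mul_sq_le_re_inner {T : E →L[𝕜] E} (hT : IsSelfAdjoint T)
    {κ : ℝ} (hκT : ∀ x, κ * ‖x‖ ^ 2 ≤ re ⟪x, T x⟫_𝕜) : (κ : 𝕜) • 1 ≤ T := by
  have hκ : IsSelfAdjoint (κ : 𝕜) := RCLike.conj_ofReal κ
  refine (le_def _ _).mpr (isPositive_def'.mpr ⟨hT.sub (hκ.smul (.one _)), fun x => ?_⟩)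
  rw [reApplyInnerSelf_apply, ← inner_conj_symm, RCLike.conj_re]
  simp only [sub_apply, smul_apply, one_apply_eq_self, inner_sub_right, inner_smul_right, map_sub,
    RCLike.re_ofReal_mul, inner_self_eq_norm_sq]
  linarith [hκT x]

theorem rankOne_self_le_one {x : E} (hx : ‖x‖ = 1) : rankOne 𝕜 x x ≤ 1 :=
  IsPositive.of_isStarProjection (isStarProjection_rankOne_self hx).one_sub

theorem exists_ne_zero_le_rankOne_self_and_le {T : E →L[𝕜] E} {x : E} (hx : ‖x‖ = 1) {κ : ℝ}
    (hκ₀ : 0 < κ) (hκ₁ : κ ≤ 1) (hκT : (κ : 𝕜) • 1 ≤ T) :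
    ∃ A : E →L[𝕜] E, A ≠ 0 ∧ A.IsPositive ∧ A ≤ rankOne 𝕜 x x ∧ A ≤ T := by
  have hx₀ : x ≠ 0 := norm_ne_zero_iff.mp (hx ▸ one_ne_zero)
  have hP : (rankOne 𝕜 x x).IsPositive := isPositive_rankOne_self x
  refine ⟨(κ : 𝕜) • rankOne 𝕜 x x,
    smul_ne_zero (by exact_mod_cast hκ₀.ne') (rankOne_ne_zero hx₀ hx₀), hP.smul_of_nonneg (by exact_mod_cast hκ₀.le), ?_, le_trans ?_ hκT⟩
  · nth_rw 1 [le_def, ← one_smul 𝕜 (rankOne 𝕜 x x)]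
    rw [← sub_smul, ← RCLike.ofReal_one, ← RCLike.ofReal_sub]
    exact hP.smul_of_nonneg (by exact_mod_cast sub_nonneg.mpr hκ₁)
  · rw [le_def, ← smul_sub]
    exact (rankOne_self_le_one hx).smul_of_nonneg (by exact_mod_cast hκ₀.le)

end ContinuousLinearMap

theorem stmt19 {H : Type*} [NormedAddCommGroup H] [InnerProductSpace ℂ H] [CompleteSpace H]
    (E : Set ℝ → (H →L[ℂ] H))
    (hposE : ∀ X : Set ℝ, MeasurableSet X → X ⊆ Set.Ico 0 (2 * Real.pi) →
      (E X).IsPositive ∧ ((1 : H →L[ℂ] H) - E X).IsPositive)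
    (X₀ : Set ℝ) (hX₀m : MeasurableSet X₀)
    (hnorm : ‖E X₀‖ < 1)
    (hadd : E X₀ + E (Set.Ico 0 (2 * Real.pi) \ X₀) = 1) :
    (∀ φ : H, (1 - ‖E X₀‖) * ‖φ‖ ^ 2 ≤
      (inner ℂ φ (E (Set.Ico 0 (2 * Real.pi) \ X₀) φ) : ℂ).re) ∧
    Function.Surjective (E (Set.Ico 0 (2 * Real.pi) \ X₀)) ∧
    (∀ φ : H, ‖φ‖ = 1 → ∃ A : H →L[ℂ] H, A ≠ 0 ∧ A.IsPositive ∧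
      ((innerSL ℂ φ).smulRight φ - A).IsPositive ∧
      (E (Set.Ico 0 (2 * Real.pi) \ X₀) - A).IsPositive) := by
  have hκ₀ : 0 < 1 - ‖E X₀‖ := sub_pos.mpr hnorm
  have hκ₁ : 1 - ‖E X₀‖ ≤ 1 := sub_le_self _ (norm_nonneg _)
  have hcoercive : ∀ φ : H, (1 - ‖E X₀‖) * ‖φ‖ ^ 2 ≤
      RCLike.re ⟪φ, E (Set.Ico 0 (2 * Real.pi) \ X₀) φ⟫_ℂ := by
    rw [eq_sub_of_add_eq' hadd]
    exact (E X₀).one_sub_norm_mul_sq_le_re_inner_one_sub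
  have hsa : IsSelfAdjoint (E (Set.Ico 0 (2 * Real.pi) \ X₀)) :=
    (hposE _ (measurableSet_Ico.diff hX₀m) Set.sdiff_subset).1.isSelfAdjoint
  exact ⟨hcoercive, surjective_of_forall_mul_sq_le_re_inner hκ₀ hcoercive, fun φ hφ =>
    exists_ne_zero_le_rankOne_self_and_le hφ hκ₀ hκ₁
      (smul_one_le_of_forall_mul_sq_le_re_inner hsa hcoercive)⟩
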